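/- Let α > 0, λ > 0, ε ∈ [0,1], β ≥ 0, Δ_IN > 0, Δ_OUT > 0 be real numbers. Define Δ_eff = (1-ε)Δ_IN + εΔ_OUT, Γ = 1 + ε(β-1), Λ = 1 + Δ_eff + ε(β²-1), p = α + λ, c = α - λ, and t = √((p-1)² + 4λ). Define Σ = (1 - α - λ + t)/(2λ), Σ̂ = (-1 + α - λ + t)/2, m = 2αΓ/(p + t + 1), q = 4α[αΓ²(p+t-3) + Λ(p+t+1)] / [(p+t+1)(p² - 2c + t² + 2t(p+1) + 1)], m̂ = m(λ + Σ̂), and q̂ = q(λ + Σ̂)² - m̂². Then these six values satisfy the ℓ2-loss self-consistent equations: m = m̂/(λ + Σ̂), q = (m̂² + q̂)/(λ + Σ̂)², Σ = 1/(λ + Σ̂), m̂ = αΓ/(1 + Σ), Σ̂ = α/(1 + Σ), and q̂ = (α/(1+Σ)²)·[1 + q + Δ_eff + ε(β²-1) - 2mΓ]. -/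

import Mathlib

/-!
Everything is governed by `s := λ + Σ̂ = (α + λ - 1 + t) / 2`, the positive root of
`s² = (α + λ - 1) s + λ`. In terms of `s` the closed forms read `Σ = 1 / s`,
`m = α Γ / (s + 1)` and `q = α (α Γ² (s - 1) + Λ (s + 1)) / ((s + 1) ((s + 1)² - α))`.
The equations for `Σ` and `Σ̂` are then rearrangements of the quadratic, those for `m` and `m̂`
are immediate, and the equation for `q̂` is linear in `q`, with the stated `q` as its solution.
-/

theorem sq_half_add_sqrt_discrim (b c : ℝ) (h : 0 ≤ b ^ 2 + 4 * c) :
    ((b + √(b ^ 2 + 4 * c)) / 2) ^ 2 = b * ((b + √(b ^ 2 + 4 * c)) / 2) + c := by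
  linear_combination (Real.sq_sqrt h) / 4

theorem half_add_sqrt_discrim_pos (b : ℝ) {c : ℝ} (hc : 0 < c) :
    0 < (b + √(b ^ 2 + 4 * c)) / 2 := by
  have : |b| < √(b ^ 2 + 4 * c) := (Real.lt_sqrt (abs_nonneg b)).2 (by rw [sq_abs]; linarith)
  linarith [neg_le_abs b]

section RidgeRoot

variable {α lam s : ℝ}

theorem one_div_eq_of_ridge_root (hroot : s ^ 2 = (α + lam - 1) * s + lam)
    (hlam : lam ≠ 0) (hs : s ≠ 0) :
    1 / s = (s - (α + lam - 1)) / lam := by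
  rw [div_eq_div_iff hs hlam]
  linear_combination -hroot

theorem sub_eq_div_one_add_inv_of_ridge_root (hroot : s ^ 2 = (α + lam - 1) * s + lam)
    (hs : 0 < s) : s - lam = α / (1 + 1 / s) := by
  rw [eq_div_iff (by positivity)]
  field_simp
  linear_combination hroot

theorem add_one_sq_sub_pos_of_ridge_root (hroot : s ^ 2 = (α + lam - 1) * s + lam)
    (hlam : 0 < lam) (hs : 0 < s) : 0 < (s + 1) ^ 2 - α := by
  -- the quadratic says `α s = (s - λ) (s + 1)`, so `α < s + 1`
  nlinarith [mul_pos hlam hs]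

end RidgeRoot

section ClosedForms

variable {α lam s t : ℝ}

theorem ridge_m_closed_form_eq (ht : t = 2 * s - (α + lam - 1)) (Γ : ℝ) :
    2 * α * Γ / (α + lam + t + 1) = α * Γ / (s + 1) := by
  rw [show α + lam + t + 1 = 2 * (s + 1) by rw [ht]; ring, mul_assoc,
    mul_div_mul_left _ _ two_ne_zero]

theorem ridge_q_closed_form_eq (ht : t = 2 * s - (α + lam - 1)) (Γ Λ : ℝ) :
    4 * α * (α * Γ ^ 2 * (α + lam + t - 3) + Λ * (α + lam + t + 1)) /
      ((α + lam + t + 1) *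
        ((α + lam) ^ 2 - 2 * (α - lam) + t ^ 2 + 2 * t * (α + lam + 1) + 1)) =
    α * (α * Γ ^ 2 * (s - 1) + Λ * (s + 1)) / ((s + 1) * ((s + 1) ^ 2 - α)) := by
  have hden : (α + lam + t + 1) *
      ((α + lam) ^ 2 - 2 * (α - lam) + t ^ 2 + 2 * t * (α + lam + 1) + 1) =
      8 * ((s + 1) * ((s + 1) ^ 2 - α)) := by rw [ht]; ring
  rw [hden, ht, mul_comm (8 : ℝ), ← div_div]
  ring

end ClosedForms

theorem ridge_overlap_sub_sq_eq {a Γ Λ s m q : ℝ} (hs : s + 1 ≠ 0)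
    (hsa : (s + 1) ^ 2 - a ≠ 0)
    (hm : m = a * Γ / (s + 1))
    (hq : q = a * (a * Γ ^ 2 * (s - 1) + Λ * (s + 1)) / ((s + 1) * ((s + 1) ^ 2 - a))) :
    q - m ^ 2 = a / (s + 1) ^ 2 * (Λ + q - 2 * m * Γ) := by
  subst hm hq
  field_simp
  ring

theorem ridge_explicit_solution_satisfies_selfconsistent_equations
    (α lam ε β : ℝ)
    (hlam : 0 < lam)
    (Δeff Γ Λ p c t S Sh m q mh qh : ℝ)
    (hΛ : Λ = 1 + Δeff + ε * (β ^ 2 - 1))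
    (hp : p = α + lam) (hc : c = α - lam)
    (ht : t = Real.sqrt ((p - 1) ^ 2 + 4 * lam))
    (hS : S = (1 - α - lam + t) / (2 * lam))
    (hSh : Sh = (-1 + α - lam + t) / 2)
    (hm : m = 2 * α * Γ / (p + t + 1))
    (hq : q = 4 * α * (α * Γ ^ 2 * (p + t - 3) + Λ * (p + t + 1)) /
      ((p + t + 1) * (p ^ 2 - 2 * c + t ^ 2 + 2 * t * (p + 1) + 1)))
    (hmh : mh = m * (lam + Sh))
    (hqh : qh = q * (lam + Sh) ^ 2 - mh ^ 2) :
    m = mh / (lam + Sh) ∧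
    q = (mh ^ 2 + qh) / (lam + Sh) ^ 2 ∧
    S = 1 / (lam + Sh) ∧
    mh = α * Γ / (1 + S) ∧
    Sh = α / (1 + S) ∧
    qh = α / (1 + S) ^ 2 * (1 + q + Δeff + ε * (β ^ 2 - 1) - 2 * m * Γ) := by
  subst hp hc
  set s := lam + Sh with hs_def
  have hs_eq : s = (α + lam - 1 + √((α + lam - 1) ^ 2 + 4 * lam)) / 2 := by
    rw [hs_def, hSh, ht]; ring
  have hroot : s ^ 2 = (α + lam - 1) * s + lam :=
    hs_eq ▸ sq_half_add_sqrt_discrim _ _ (by positivity)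
  have hs : 0 < s := hs_eq ▸ half_add_sqrt_discrim_pos _ hlam
  have ht_s : t = 2 * s - (α + lam - 1) := by rw [hs_def, hSh]; ring
  have hS_s : S = 1 / s := by
    rw [hS, one_div_eq_of_ridge_root hroot hlam.ne' hs.ne', ht_s]; ring
  have hm_s := hm.trans (ridge_m_closed_form_eq ht_s Γ)
  have hq_m := ridge_overlap_sub_sq_eq (by positivity)
    (add_one_sq_sub_pos_of_ridge_root hroot hlam hs).ne' hm_s
    (hq.trans (ridge_q_closed_form_eq ht_s Γ Λ))
  refine ⟨?_, ?_, hS_s, ?_, ?_, ?_⟩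
  · rw [hmh]; field_simp
  · rw [hqh]; field_simp; ring
  · rw [hmh, hm_s, hS_s]; field_simp
  · rw [hS_s, ← sub_eq_div_one_add_inv_of_ridge_root hroot hs]; ring
  · rw [hqh, hmh, hS_s]
    calc q * s ^ 2 - (m * s) ^ 2 = s ^ 2 * (q - m ^ 2) := by ring
      _ = α / (1 + 1 / s) ^ 2 * (1 + q + Δeff + ε * (β ^ 2 - 1) - 2 * m * Γ) := by
        rw [hq_m, hΛ]; field_simp; ring
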